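/- Let Q ∈ ℝ_+^N be a queue-length vector, let S ⊆ {0,1}^N be a finite nonempty set of activation vectors such that for every coordinate i there exists s ∈ S with s_i = 1, and let λ ∈ ℝ_+^N satisfy λ ≤ Σ_{j=1}^K α_j s_j (componentwise) for some s_1,…,s_K ∈ S and nonnegative coefficients α_1,…,α_K with Σ_{j=1}^K α_j = 1 − ε, where 0 < ε ≤ 1. If π ∈ S is a max-weight activation, i.e., π · Q = max_{ρ ∈ S} ρ · Q, then Q · (λ − π) ≤ −(ε/N) · Σ_{i=1}^N Q_i. -/
import Mathlib


open Finset

/-- **Negative drift of the max-weight activation.**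
Under the capacity condition `lam ≤ Σⱼ αⱼ sⱼ` with `Σⱼ αⱼ = 1 − ε`, `0 < ε ≤ 1`, and a
covering feasible set `S ⊆ {0,1}^N`, any max-weight activation `π ∈ S` (i.e.
`π · Q = max_{ρ ∈ S} ρ · Q`) satisfies `Q · (lam − π) ≤ −(ε/N)·Σᵢ Qᵢ`. -/
theorem maxweight_negative_drift
    (N : ℕ) (Q : Fin N → ℝ) (hQ : ∀ i, 0 ≤ Q i)
    (S : Finset (Fin N → ℝ)) (hS : S.Nonempty)
    (hS01 : ∀ ρ ∈ S, ∀ i, ρ i = 0 ∨ ρ i = 1)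
    (hcover : ∀ i, ∃ ρ ∈ S, ρ i = 1)
    (lam : Fin N → ℝ) (hlam : ∀ i, 0 ≤ lam i)
    (K : ℕ) (s : Fin K → (Fin N → ℝ)) (hs : ∀ j, s j ∈ S)
    (α : Fin K → ℝ) (hα : ∀ j, 0 ≤ α j)
    (ε : ℝ) (hε : 0 < ε) (hε1 : ε ≤ 1) (hαsum : ∑ j, α j = 1 - ε)
    (hcap : ∀ i, lam i ≤ ∑ j, α j * s j i)
    (π : Fin N → ℝ) (hπS : π ∈ S)
    (hπ : ∑ i, π i * Q i = S.sup' hS (fun ρ => ∑ i, ρ i * Q i)) :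
    ∑ i, Q i * (lam i - π i) ≤ -(ε / N) * ∑ i, Q i := by
  set M := S.sup' hS (fun ρ => ∑ i, ρ i * Q i) with hM
  have hρnn : ∀ ρ ∈ S, ∀ k, (0:ℝ) ≤ ρ k := by
    intro ρ hρ k
    rcases hS01 ρ hρ k with h | h <;> simp [h]
  have hdotM : ∀ ρ ∈ S, ∑ i, ρ i * Q i ≤ M := fun ρ hρ => by
    exact le_sup' (fun ρ => ∑ i, ρ i * Q i) hρ
  have hQleM : ∀ i, Q i ≤ M := by
    intro i
    obtain ⟨ρ, hρ, hρi⟩ := hcover i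
    calc Q i = ρ i * Q i := by rw [hρi, one_mul]
      _ ≤ ∑ k, ρ k * Q k :=
          Finset.single_le_sum (fun k _ => mul_nonneg (hρnn ρ hρ k) (hQ k)) (mem_univ i)
      _ ≤ M := hdotM ρ hρ
  have hMnn : 0 ≤ M := by
    rw [← hπ]
    exact Finset.sum_nonneg fun i _ => mul_nonneg (hρnn π hπS i) (hQ i)
  have hsumQ : ∑ i, Q i ≤ (N:ℝ) * M := by
    calc ∑ i, Q i ≤ ∑ _i : Fin N, M := Finset.sum_le_sum fun i _ => hQleM i
      _ = (N:ℝ) * M := by simp [mul_comm]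
  have hQlam : ∑ i, Q i * lam i ≤ (1 - ε) * M := by
    calc ∑ i, Q i * lam i ≤ ∑ i, Q i * ∑ j, α j * s j i :=
          Finset.sum_le_sum fun i _ => mul_le_mul_of_nonneg_left (hcap i) (hQ i)
      _ = ∑ j, α j * ∑ i, s j i * Q i := by
          simp_rw [Finset.mul_sum]
          rw [Finset.sum_comm]
          exact Finset.sum_congr rfl fun j _ => Finset.sum_congr rfl fun i _ => by ring
      _ ≤ ∑ j, α j * M :=
          Finset.sum_le_sum fun j _ =>
            mul_le_mul_of_nonneg_left (hdotM (s j) (hs j)) (hα j)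
      _ = (1 - ε) * M := by rw [← Finset.sum_mul, hαsum]
  have hsplit : ∑ i, Q i * (lam i - π i) = (∑ i, Q i * lam i) - ∑ i, π i * Q i := by
    rw [← Finset.sum_sub_distrib]
    congr 1; ext i; ring
  rw [hsplit, hπ]
  have key : (∑ i, Q i * lam i) - M ≤ -ε * M := by nlinarith
  rcases Nat.eq_zero_or_pos N with hN | hN
  · subst hN; simp; exact hMnn
  · have hNpos : (0:ℝ) < N := by exact_mod_cast hN
    have : -(ε / N) * ∑ i, Q i ≥ -ε * M := by
      rw [ge_iff_le, neg_mul, neg_mul, neg_le_neg_iff]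
      rw [div_mul_eq_mul_div, div_le_iff₀ hNpos]
      nlinarith
    linarith
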